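/- Let μ ∈ ℝ, ε > 0 and b ≥ 0. Let X_1, X_2, … be i.i.d. N(μ, 1) random variables and X̄_s = s^{−1}Σ_{t=1}^s X_t. Then Σ_{s=1}^∞ P( X̄_s + √(2b/s) ≤ μ − ε ) ≤ 2·C₀·ε^{−2}·exp( −b − ε√(2b) ), where C₀ = sup_{y>0} y² e^{−y²/2} / (1 − e^{−y²/2}), and C₀ is finite. -/

import Mathlib

open MeasureTheory ProbabilityTheory
open Real
open scoped ENNReal NNReal

lemma gauss_pdf_mul_exp (m u x : ℝ) :
    rexp (u * x) * gaussianPDFReal m 1 x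
      = rexp (m * u + u ^ 2 / 2) * gaussianPDFReal (m + u) 1 x := by
  simp only [gaussianPDFReal, NNReal.coe_one, mul_one]
  rw [mul_left_comm, mul_left_comm (rexp (m * u + u ^ 2 / 2)), ← Real.exp_add, ← Real.exp_add]
  congr 2
  ring

lemma integral_gaussianReal_one (m : ℝ) (g : ℝ → ℝ) :
    ∫ x, g x ∂(gaussianReal m 1) = ∫ x, gaussianPDFReal m 1 x * g x := by
  rw [gaussianReal_of_var_ne_zero m one_ne_zero]
  have h1 : gaussianPDF m 1 = fun x => ((gaussianPDFReal m 1 x).toNNReal : ℝ≥0∞) := rfl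
  rw [h1, integral_withDensity_eq_integral_smul
    ((measurable_gaussianPDFReal m 1).real_toNNReal) g]
  congr 1 with x
  rw [NNReal.smul_def, smul_eq_mul, Real.coe_toNNReal _ (gaussianPDFReal_nonneg m 1 x)]

lemma integrable_gaussianReal_one (m : ℝ) {g : ℝ → ℝ}
    (h : Integrable (fun x => gaussianPDFReal m 1 x * g x)) :
    Integrable g (gaussianReal m 1) := by
  rw [gaussianReal_of_var_ne_zero m one_ne_zero]
  have h1 : gaussianPDF m 1 = fun x => ((gaussianPDFReal m 1 x).toNNReal : ℝ≥0∞) := rfl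
  rw [h1, integrable_withDensity_iff_integrable_smul
    ((measurable_gaussianPDFReal m 1).real_toNNReal)]
  refine h.congr (Filter.Eventually.of_forall fun x => ?_)
  simp only [NNReal.smul_def, smul_eq_mul, Real.coe_toNNReal _ (gaussianPDFReal_nonneg m 1 x)]

lemma integrable_exp_gaussianReal (m u : ℝ) :
    Integrable (fun x => rexp (u * x)) (gaussianReal m 1) := by
  apply integrable_gaussianReal_one m
  have h : (fun x => gaussianPDFReal m 1 x * rexp (u * x))
      = fun x => rexp (m * u + u ^ 2 / 2) * gaussianPDFReal (m + u) 1 x := by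
    funext x; rw [mul_comm, gauss_pdf_mul_exp]
  rw [h]
  exact (integrable_gaussianPDFReal (m + u) 1).const_mul _

lemma integral_exp_gaussianReal (m u : ℝ) :
    ∫ x, rexp (u * x) ∂(gaussianReal m 1) = rexp (m * u + u ^ 2 / 2) := by
  rw [integral_gaussianReal_one]
  have h : (fun x => gaussianPDFReal m 1 x * rexp (u * x))
      = fun x => rexp (m * u + u ^ 2 / 2) * gaussianPDFReal (m + u) 1 x := by
    funext x; rw [mul_comm, gauss_pdf_mul_exp]
  rw [show ∫ x, gaussianPDFReal m 1 x * rexp (u * x)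
      = ∫ x, rexp (m * u + u ^ 2 / 2) * gaussianPDFReal (m + u) 1 x from by rw [h],
    integral_const_mul, integral_gaussianPDFReal_eq_one (m + u) one_ne_zero, mul_one]

lemma mgf_of_map {Ω : Type*} [MeasurableSpace Ω] (P : Measure Ω) (m : ℝ) {X : Ω → ℝ}
    (hX : Measurable X) (hd : Measure.map X P = gaussianReal m 1) (u : ℝ) :
    mgf X P u = rexp (m * u + u ^ 2 / 2) := by
  rw [mgf, ← integral_exp_gaussianReal m u, ← hd,
    integral_map hX.aemeasurable ((measurable_id'.const_mul u).exp.aestronglyMeasurable)]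

lemma integrable_exp_of_map {Ω : Type*} [MeasurableSpace Ω] (P : Measure Ω) (m : ℝ) {X : Ω → ℝ}
    (hX : Measurable X) (hd : Measure.map X P = gaussianReal m 1) (u : ℝ) :
    Integrable (fun ω => rexp (u * X ω)) P := by
  have h := integrable_exp_gaussianReal m u
  rw [← hd] at h
  exact (integrable_map_measure ((measurable_id'.const_mul u).exp.aestronglyMeasurable) hX.aemeasurable).mp h

lemma term_bound {Ω : Type*} [MeasurableSpace Ω] (P : Measure Ω) [IsProbabilityMeasure P]
    (μ ε b : ℝ) (hε : 0 < ε) (hb : 0 ≤ b)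
    (X : ℕ → Ω → ℝ) (hmeas : ∀ t, Measurable (X t))
    (hindep : iIndepFun X P)
    (hdist : ∀ t, Measure.map (X t) P = gaussianReal μ 1) (s : ℕ) :
    P {ω | (∑ t ∈ Finset.range (s + 1), X t ω) / (s + 1)
        + Real.sqrt (2 * b / (s + 1)) ≤ μ - ε}
      ≤ ENNReal.ofReal (rexp (-b - ε * Real.sqrt (2 * b))
          * rexp (-(((s : ℝ) + 1) * ε ^ 2 / 2))) := by
  obtain ⟨n, hn⟩ : ∃ n : ℝ, n = (s : ℝ) + 1 := ⟨_, rfl⟩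
  have hn0 : 0 < n := by rw [hn]; positivity
  have hn1 : (1 : ℝ) ≤ n := by rw [hn]; simp only [le_add_iff_nonneg_left]; positivity
  obtain ⟨d, hd⟩ : ∃ d : ℝ, d = Real.sqrt (2 * b / n) := ⟨_, rfl⟩
  have hd0 : 0 ≤ d := hd ▸ Real.sqrt_nonneg _
  obtain ⟨a, ha⟩ : ∃ a : ℝ, a = n * ε + n * d := ⟨_, rfl⟩
  have ha0 : 0 < a := by nlinarith
  obtain ⟨u, hu⟩ : ∃ u : ℝ, u = -(a / n) := ⟨_, rfl⟩
  have hu0 : u ≤ 0 := by rw [hu]; exact neg_nonpos.mpr (by positivity)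
  -- rewrite the event
  have hset : {ω | (∑ t ∈ Finset.range (s + 1), X t ω) / (s + 1)
        + Real.sqrt (2 * b / (s + 1)) ≤ μ - ε}
      = {ω | (∑ t ∈ Finset.range (s + 1), X t) ω ≤ n * μ - a} := by
    ext ω
    simp only [Set.mem_setOf_eq, Finset.sum_apply]
    rw [← hn, ← hd, ← le_sub_iff_add_le, div_le_iff₀ hn0]
    constructor <;> intro h <;> nlinarith
  rw [hset]
  -- Chernoff bound
  have h_int_i : ∀ i ∈ Finset.range (s + 1), Integrable (fun ω => rexp (u * X i ω)) P :=
    fun i _ => integrable_exp_of_map P μ (hmeas i) (hdist i) u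
  have h_int : Integrable (fun ω => rexp (u * (∑ i ∈ Finset.range (s + 1), X i) ω)) P :=
    hindep.integrable_exp_mul_sum hmeas h_int_i
  have hch := measure_le_le_exp_mul_mgf (μ := P) (X := ∑ i ∈ Finset.range (s + 1), X i)
      (n * μ - a) hu0 h_int
  rw [hindep.mgf_sum hmeas,
    Finset.prod_congr rfl (fun i _ => mgf_of_map P μ (hmeas i) (hdist i) u),
    Finset.prod_const, Finset.card_range] at hch
  -- compute the Chernoff RHS
  have hRHS : rexp (-u * (n * μ - a)) * rexp (μ * u + u ^ 2 / 2) ^ (s + 1)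
      = rexp (-(a ^ 2 / (2 * n))) := by
    rw [← Real.exp_nat_mul, ← Real.exp_add]
    congr 1
    have hcast : ((s + 1 : ℕ) : ℝ) = n := by push_cast [hn]; ring
    rw [hcast, hu]
    field_simp
    ring
  -- bound the exponent
  have hd2 : n * d ^ 2 = 2 * b := by
    rw [hd, Real.sq_sqrt (by positivity)]; field_simp
  have hnd : Real.sqrt (2 * b) ≤ n * d := by
    have h1 : 2 * b ≤ (n * d) ^ 2 := by nlinarith
    calc Real.sqrt (2 * b) ≤ Real.sqrt ((n * d) ^ 2) := Real.sqrt_le_sqrt h1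
      _ = n * d := Real.sqrt_sq (by positivity)
  have ha2 : a ^ 2 = n ^ 2 * ε ^ 2 + 2 * n ^ 2 * ε * d + 2 * b * n := by
    calc a ^ 2 = n ^ 2 * ε ^ 2 + 2 * n ^ 2 * ε * d + n * (n * d ^ 2) := by rw [ha]; ring
    _ = _ := by rw [hd2]; ring
  have hexp_le : -(a ^ 2 / (2 * n)) ≤ (-b - ε * Real.sqrt (2 * b)) + (-(n * ε ^ 2 / 2)) := by
    have key : a ^ 2 / (2 * n) = n * ε ^ 2 / 2 + ε * (n * d) + b := by
      rw [ha2]; field_simp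
    rw [key]
    have : ε * Real.sqrt (2 * b) ≤ ε * (n * d) := by
      exact mul_le_mul_of_nonneg_left hnd hε.le
    linarith
  refine (ENNReal.le_ofReal_iff_toReal_le (measure_ne_top _ _) (by positivity)).mpr ?_
  calc (P {ω | (∑ t ∈ Finset.range (s + 1), X t) ω ≤ n * μ - a}).toReal
      ≤ rexp (-u * (n * μ - a)) * rexp (μ * u + u ^ 2 / 2) ^ (s + 1) := hch
    _ = rexp (-(a ^ 2 / (2 * n))) := hRHS
    _ ≤ rexp (-b - ε * Real.sqrt (2 * b)) * rexp (-(n * ε ^ 2 / 2)) := by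
        rw [← Real.exp_add]; exact Real.exp_le_exp.mpr hexp_le
    _ = rexp (-b - ε * Real.sqrt (2 * b)) * rexp (-(((s : ℝ) + 1) * ε ^ 2 / 2)) := by rw [← hn]

/-- The set of values `y² e^{-y²/2} / (1 - e^{-y²/2})` for `y > 0`. -/
def C0Set : Set ℝ :=
    {x : ℝ | ∃ y : ℝ, 0 < y ∧
      x = y ^ 2 * Real.exp (-y ^ 2 / 2) / (1 - Real.exp (-y ^ 2 / 2))}

/-- `C₀ = sup_{y>0} y² e^{-y²/2} / (1 - e^{-y²/2})`. -/
noncomputable def C0 : ℝ := sSup C0Set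

theorem stmt_11 {Ω : Type*} [MeasurableSpace Ω] (P : Measure Ω) [IsProbabilityMeasure P]
    (μ ε b : ℝ) (hε : 0 < ε) (hb : 0 ≤ b)
    (X : ℕ → Ω → ℝ) (hmeas : ∀ t, Measurable (X t))
    (hindep : iIndepFun X P)
    (hdist : ∀ t, Measure.map (X t) P = gaussianReal μ 1) :
    BddAbove C0Set ∧
    ∑' s : ℕ,
        P {ω | (∑ t ∈ Finset.range (s + 1), X t ω) / (s + 1)
            + Real.sqrt (2 * b / (s + 1)) ≤ μ - ε}
      ≤ ENNReal.ofReal (2 * C0 * ε⁻¹ ^ 2 * Real.exp (-b - ε * Real.sqrt (2 * b))) := by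
  have hC2 : ∀ x ∈ C0Set, x ≤ (2 : ℝ) := by
    rintro x ⟨y, hy, rfl⟩
    have hlt : Real.exp (-y ^ 2 / 2) < 1 := by
      rw [Real.exp_lt_one_iff]; nlinarith
    have hpos : 0 < 1 - Real.exp (-y ^ 2 / 2) := by linarith
    rw [div_le_iff₀ hpos]
    have he : 0 < Real.exp (-y ^ 2 / 2) := Real.exp_pos _
    have h1 := Real.add_one_le_exp (y ^ 2 / 2)
    have hmul : (y ^ 2 / 2 + 1) * Real.exp (-y ^ 2 / 2) ≤ 1 := by
      calc (y ^ 2 / 2 + 1) * Real.exp (-y ^ 2 / 2)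
          ≤ Real.exp (y ^ 2 / 2) * Real.exp (-y ^ 2 / 2) :=
            mul_le_mul_of_nonneg_right h1 he.le
        _ = 1 := by rw [← Real.exp_add, show y ^ 2 / 2 + -y ^ 2 / 2 = 0 by ring, Real.exp_zero]
    nlinarith
  have hbdd : BddAbove C0Set := ⟨2, hC2⟩
  refine ⟨hbdd, ?_⟩
  have hr0 : 0 < Real.exp (-ε ^ 2 / 2) := Real.exp_pos _
  have hr1 : Real.exp (-ε ^ 2 / 2) < 1 := by rw [Real.exp_lt_one_iff]; nlinarith
  have hrpos : 0 < 1 - Real.exp (-ε ^ 2 / 2) := by linarith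
  have hK0 : 0 < rexp (-b - ε * Real.sqrt (2 * b)) := Real.exp_pos _
  have hel : ε ^ 2 * Real.exp (-ε ^ 2 / 2) / (1 - Real.exp (-ε ^ 2 / 2)) ≤ C0 :=
    le_csSup hbdd ⟨ε, hε, rfl⟩
  have hC0 : 0 ≤ C0 := le_trans (by positivity) hel
  -- abbreviations
  obtain ⟨K, hK⟩ : ∃ K : ℝ, K = rexp (-b - ε * Real.sqrt (2 * b)) := ⟨_, rfl⟩
  obtain ⟨r, hr⟩ : ∃ r : ℝ, r = Real.exp (-ε ^ 2 / 2) := ⟨_, rfl⟩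
  have hfun : ∀ s : ℕ, K * rexp (-(((s : ℝ) + 1) * ε ^ 2 / 2)) = (K * r) * r ^ s := by
    intro s
    rw [hr, ← Real.exp_nat_mul, mul_assoc, ← Real.exp_add]
    congr 1
    push_cast
    ring
  have hsummable : Summable (fun s : ℕ => K * rexp (-(((s : ℝ) + 1) * ε ^ 2 / 2))) := by
    simp only [hfun]
    exact (summable_geometric_of_lt_one (by rw [hr]; positivity) (hr ▸ hr1)).mul_left _
  calc ∑' s : ℕ,
        P {ω | (∑ t ∈ Finset.range (s + 1), X t ω) / (s + 1)
            + Real.sqrt (2 * b / (s + 1)) ≤ μ - ε}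
      ≤ ∑' s : ℕ, ENNReal.ofReal (K * rexp (-(((s : ℝ) + 1) * ε ^ 2 / 2))) :=
        ENNReal.tsum_le_tsum (fun s => by
          rw [hK]; exact term_bound P μ ε b hε hb X hmeas hindep hdist s)
    _ = ENNReal.ofReal (∑' s : ℕ, K * rexp (-(((s : ℝ) + 1) * ε ^ 2 / 2))) :=
        (ENNReal.ofReal_tsum_of_nonneg (fun s => by rw [hK]; positivity) hsummable).symm
    _ ≤ ENNReal.ofReal (2 * C0 * ε⁻¹ ^ 2 * Real.exp (-b - ε * Real.sqrt (2 * b))) := by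
        apply ENNReal.ofReal_le_ofReal
        have htsum : ∑' s : ℕ, K * rexp (-(((s : ℝ) + 1) * ε ^ 2 / 2))
            = (K * r) * (1 - r)⁻¹ := by
          simp only [hfun]
          rw [tsum_mul_left, tsum_geometric_of_lt_one (by rw [hr]; positivity) (hr ▸ hr1)]
        rw [htsum]
        have h2 : r * (1 - r)⁻¹ ≤ 2 * C0 * ε⁻¹ ^ 2 := by
          have heq : r * (1 - r)⁻¹
              = (ε ^ 2 * Real.exp (-ε ^ 2 / 2) / (1 - Real.exp (-ε ^ 2 / 2))) * ε⁻¹ ^ 2 := by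
            rw [hr]; field_simp
          rw [heq]
          calc (ε ^ 2 * Real.exp (-ε ^ 2 / 2) / (1 - Real.exp (-ε ^ 2 / 2))) * ε⁻¹ ^ 2
              ≤ C0 * ε⁻¹ ^ 2 := mul_le_mul_of_nonneg_right hel (by positivity)
            _ ≤ 2 * C0 * ε⁻¹ ^ 2 := by nlinarith [sq_nonneg ε⁻¹]
        calc K * r * (1 - r)⁻¹ = (r * (1 - r)⁻¹) * K := by ring
          _ ≤ (2 * C0 * ε⁻¹ ^ 2) * K := by
              apply mul_le_mul_of_nonneg_right h2 (by rw [hK]; positivity)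
          _ = 2 * C0 * ε⁻¹ ^ 2 * Real.exp (-b - ε * Real.sqrt (2 * b)) := by rw [hK]
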